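/- Let P be a polyhedron in a real vector space, τ ≠ P a face of P, and let F_τ be the set of maximal proper faces of P containing τ. Suppose for each θ ∈ F_τ a nonzero linear functional f_θ is chosen with f_θ ≥ 0 on P and f_θ = 0 on θ, such that τ = (∩_{θ ∈ F_τ} ker f_θ) ∩ P. If γ is a face of P and b ∈ relint(γ) satisfies f_θ(b) = 0 for all θ ∈ F_τ, then γ ⊆ τ. -/

import Mathlib

/-- `F` is a face of the convex set `C`. (`C` itself is a face of `C`.) -/
def IsFaceOf {V : Type*} [AddCommGroup V] [Module ℝ V] (F C : Set V) : Prop :=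
  F ⊆ C ∧ Convex ℝ F ∧ ∀ x ∈ C, ∀ y ∈ C, ∀ δ : ℝ, 0 < δ → δ < 1 →
    δ • x + (1 - δ) • y ∈ F → x ∈ F ∧ y ∈ F

/-!
If a nonnegative linear functional vanishes at a relative interior point `b` of `γ ⊆ P`, it
vanishes on all of `γ`: every `g ∈ γ` is an endpoint of an open segment in `γ` through `b`,
obtained by pushing `g` past `b` while staying in `γ`. Hence `γ` lies in the common zero set of
the `f θ` on `P`, which is `τ`.
-/

open Set Filter Topology

theorem exists_mem_openSegment_of_mem_intrinsicInterior {V : Type*} [AddCommGroup V]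
    [Module ℝ V] [TopologicalSpace V] [IsTopologicalAddGroup V] [ContinuousSMul ℝ V]
    {s : Set V} {b g : V} (hb : b ∈ intrinsicInterior ℝ s) (hg : g ∈ s) :
    ∃ z ∈ s, b ∈ openSegment ℝ g z := by
  obtain ⟨b, hbs, rfl⟩ := mem_intrinsicInterior.1 hb
  let line : ℝ → affineSpan ℝ s := fun t ↦
    ⟨AffineMap.lineMap g b t, AffineMap.lineMap_mem _ (subset_affineSpan ℝ s hg) b.2⟩
  have hline : Continuous line := by fun_prop
  have hline₁ : line 1 ∈ interior ((↑) ⁻¹' s) := by simpa [line] using hbs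
  have hbeyond : ∀ᶠ t in 𝓝[>] 1, line t ∈ interior ((↑) ⁻¹' s) ∧ 1 < t :=
    (((hline.tendsto 1).eventually (isOpen_interior.mem_nhds hline₁)).filter_mono
      nhdsWithin_le_nhds).and self_mem_nhdsWithin
  obtain ⟨t, hts, ht⟩ := hbeyond.exists
  have ht₀ : t ≠ 0 := by positivity
  refine ⟨line t, (interior_subset hts : line t ∈ (↑) ⁻¹' s), 1 - t⁻¹, t⁻¹,
    by simp [inv_lt_one_of_one_lt₀ ht], by positivity, by ring, ?_⟩
  simp only [line, AffineMap.lineMap_apply_module]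
  match_scalars
  · field_simp
    ring
  · field_simp

theorem isExtreme_sep_eq_zero {𝕜 E : Type*} [Field 𝕜] [LinearOrder 𝕜] [IsStrictOrderedRing 𝕜]
    [AddCommGroup E] [Module 𝕜 E] {A : Set E} {f : E →ₗ[𝕜] 𝕜} (hf : ∀ x ∈ A, 0 ≤ f x) :
    IsExtreme 𝕜 A {x ∈ A | f x = 0} where
  subset := sep_subset _ _
  left_mem_of_mem_openSegment := by
    rintro x hx y hy _ ⟨-, hz⟩ ⟨a, c, ha, hc, -, rfl⟩
    rw [map_add, map_smul, map_smul, smul_eq_mul, smul_eq_mul] at hz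
    have hfx := ((add_eq_zero_iff_of_nonneg (mul_nonneg ha.le (hf x hx))
      (mul_nonneg hc.le (hf y hy))).1 hz).1
    exact ⟨hx, (mul_eq_zero.1 hfx).resolve_left ha.ne'⟩

theorem IsExtreme.subset_of_mem_intrinsicInterior {V : Type*} [AddCommGroup V]
    [Module ℝ V] [TopologicalSpace V] [IsTopologicalAddGroup V] [ContinuousSMul ℝ V]
    {A B s : Set V} {b : V} (hAB : IsExtreme ℝ A B) (hsA : s ⊆ A)
    (hb : b ∈ intrinsicInterior ℝ s) (hbB : b ∈ B) : s ⊆ B := by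
  intro g hg
  obtain ⟨z, hz, hbz⟩ := exists_mem_openSegment_of_mem_intrinsicInterior hb hg
  exact hAB.left_mem_of_mem_openSegment (hsA hg) (hsA hz) hbB hbz

theorem stmt_14_general {V : Type*} [NormedAddCommGroup V] [NormedSpace ℝ V]
    (P : Set V)
    (τ : Set V)
    (Fτ : Set (Set V))
    (f : Set V → (V →ₗ[ℝ] ℝ))
    (hfP : ∀ θ ∈ Fτ, ∀ x ∈ P, 0 ≤ f θ x)
    (hτeq : τ = (⋂ θ ∈ Fτ, {x | f θ x = 0}) ∩ P)
    (γ : Set V) (hγ : IsFaceOf γ P) (b : V)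
    (hb : b ∈ intrinsicInterior ℝ γ) (hbf : ∀ θ ∈ Fτ, f θ b = 0) :
    γ ⊆ τ := by
  intro g hg
  rw [hτeq]
  refine ⟨mem_iInter₂.2 fun θ hθ ↦ ?_, hγ.1 hg⟩
  have hbP : b ∈ P := hγ.1 (intrinsicInterior_subset hb)
  exact ((isExtreme_sep_eq_zero (hfP θ hθ)).subset_of_mem_intrinsicInterior hγ.1 hb
    ⟨hbP, hbf θ hθ⟩ hg).2

/-- Let `P` be a polyhedron, `τ ≠ P` a face of `P`, and `Fτ` the set of
maximal proper faces of `P` containing `τ`.  Choose for each `θ ∈ Fτ` a nonzero linear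
functional `f θ` with `f θ ≥ 0` on `P`, `f θ = 0` on `θ`, such that
`τ = (∩_{θ ∈ Fτ} ker (f θ)) ∩ P`.  If `γ` is a face of `P` and `b ∈ relint γ` satisfies
`f θ b = 0` for all `θ ∈ Fτ`, then `γ ⊆ τ`. -/
theorem stmt_14 {V : Type*} [NormedAddCommGroup V] [NormedSpace ℝ V]
    [FiniteDimensional ℝ V] (P : Set V)
    (hpoly : ∃ H : Finset ((V →ₗ[ℝ] ℝ) × ℝ), P = {x | ∀ h ∈ H, h.2 ≤ h.1 x})
    (τ : Set V) (hτ : IsFaceOf τ P) (hτne : τ ≠ P)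
    (Fτ : Set (Set V))
    (hFτ : Fτ = {θ | IsFaceOf θ P ∧ θ ≠ P ∧ τ ⊆ θ ∧
      ∀ θ', IsFaceOf θ' P → θ' ≠ P → θ ⊆ θ' → θ' = θ})
    (f : Set V → (V →ₗ[ℝ] ℝ))
    (hfne : ∀ θ ∈ Fτ, f θ ≠ 0)
    (hfP : ∀ θ ∈ Fτ, ∀ x ∈ P, 0 ≤ f θ x)
    (hfθ : ∀ θ ∈ Fτ, ∀ x ∈ θ, f θ x = 0)
    (hτeq : τ = (⋂ θ ∈ Fτ, {x | f θ x = 0}) ∩ P)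
    (γ : Set V) (hγ : IsFaceOf γ P) (b : V)
    (hb : b ∈ intrinsicInterior ℝ γ) (hbf : ∀ θ ∈ Fτ, f θ b = 0) :
    γ ⊆ τ :=
  stmt_14_general P τ Fτ f hfP hτeq γ hγ b hb hbf
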